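/- Let G be a finite group, S a generating set of G, and consider the Cayley graph Cay(G, S) with G acting by left multiplication. Let H ≤ G be a subgroup and S₀ ⊆ S a subset generating H. Then as H-lattices, Fl(Cay(G, S)) ≅ Fl(Cay(H, S₀)) ⊕ P where P is a free ℤH-module, and the restriction of the isomorphism to Fl(Cay(H, S₀)) is the natural embedding induced by the inclusion of graphs Cay(H, S₀) ⊆ Cay(G, S). -/

import Mathlib

/-!
Let `P` be the set of edges of `Cay(H, S₀)` together with a "tree": every vertex `g ∉ H` keeps one
edge to a neighbour whose coset is strictly closer to `H` in the Schreier coset graph, chosen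
depending only on the coset `H g`, so that `P` is `H`-invariant. Then `P` connects all vertices,
so every edge `e ∉ P` closes a cycle `c_e` equal to `δ_e` off `P`; and every tree edge is a bridge
hanging off `Cay(H, S₀)`, so a flow supported on `P` is supported on `Cay(H, S₀)`. `H` acts freely
on the edges outside `P`; for orbit representatives `i`, the translates `h • c_i` split off the
free summand: `f ↦ (f - ∑ f(h i) • h • c_i, (f(h i))_{i,h})`.
-/

structure DiGraph (V E : Type*) where
  src : E → V
  tgt : E → V

noncomputable def DiGraph.boundary {V E : Type*} [Fintype E] [DecidableEq V]
    (X : DiGraph V E) : (E → ℤ) →ₗ[ℤ] (V → ℤ) where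
  toFun f := fun v =>
    ∑ e, f e * ((if X.tgt e = v then 1 else 0) - (if X.src e = v then 1 else 0))
  map_add' f g := by
    funext v
    simp [add_mul, Finset.sum_add_distrib]
  map_smul' c f := by
    funext v
    simp [Finset.mul_sum, mul_assoc]

/-- The shift of a function on edges by a permutation: `(π • f) e = f (π⁻¹ e)`. -/
def eshift {E : Type*} (π : Equiv.Perm E) (f : E → ℤ) : E → ℤ := fun e => f (π⁻¹ e)

theorem eshift_flow_mem {V E : Type*} [Fintype E] [DecidableEq V] (X : DiGraph V E)
    {G : Type*} [Group G] (actV : G →* Equiv.Perm V) (actE : G →* Equiv.Perm E)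
    (hsrc : ∀ g e, X.src (actE g e) = actV g (X.src e))
    (htgt : ∀ g e, X.tgt (actE g e) = actV g (X.tgt e))
    (g : G) {f : E → ℤ} (hf : f ∈ LinearMap.ker X.boundary) :
    eshift (actE g) f ∈ LinearMap.ker X.boundary := by
  rw [LinearMap.mem_ker] at hf ⊢
  funext v
  have h0 : X.boundary f ((actV g)⁻¹ v) = 0 := by rw [hf]; rfl
  simp only [DiGraph.boundary, LinearMap.coe_mk, AddHom.coe_mk, eshift, Pi.zero_apply] at h0 ⊢
  rw [← Equiv.sum_comp (actE g) (fun e => f ((actE g)⁻¹ e) *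
      ((if X.tgt e = v then 1 else 0) - (if X.src e = v then 1 else 0)))]
  refine Eq.trans (Finset.sum_congr rfl ?_) h0
  intro e _
  simp only [show (actE g)⁻¹ (actE g e) = e from Equiv.symm_apply_apply (actE g) e, htgt, hsrc]
  congr 2
  · by_cases h : X.tgt e = (actV g)⁻¹ v
    · simp [h]
    · have h2 : actV g (X.tgt e) ≠ v := fun hc => h (by rw [← hc]; simp)
      simp only [if_neg h, if_neg h2]
  · by_cases h : X.src e = (actV g)⁻¹ v
    · simp [h]
    · have h2 : actV g (X.src e) ≠ v := fun hc => h (by rw [← hc]; simp)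
      simp only [if_neg h, if_neg h2]

instance addAutMulGroup {A : Type*} [Add A] : Group (AddAut A) where
  mul g h := AddEquiv.trans h g
  one := AddEquiv.refl _
  inv := AddEquiv.symm
  mul_assoc _ _ _ := rfl
  one_mul _ := rfl
  mul_one _ := rfl
  inv_mul_cancel := AddEquiv.self_trans_symm

@[simp]
theorem addAutMulGroup_one_apply {A : Type*} [Add A] (a : A) : (1 : AddAut A) a = a := rfl

@[simp]
theorem addAutMulGroup_mul_apply {A : Type*} [Add A] (e₁ e₂ : AddAut A) (a : A) :
    (e₁ * e₂) a = e₁ (e₂ a) := rfl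

/-- The `G`-lattice structure on the flow lattice induced by a graph action. -/
noncomputable def flowRep {V E : Type*} [Fintype E] [DecidableEq V] (X : DiGraph V E)
    {G : Type*} [Group G] (actV : G →* Equiv.Perm V) (actE : G →* Equiv.Perm E)
    (hsrc : ∀ g e, X.src (actE g e) = actV g (X.src e))
    (htgt : ∀ g e, X.tgt (actE g e) = actV g (X.tgt e)) :
    G →* AddAut ↥(LinearMap.ker X.boundary) where
  toFun g :=
    { toFun := fun f => ⟨eshift (actE g) f, eshift_flow_mem X actV actE hsrc htgt g f.2⟩
      invFun := fun f => ⟨eshift (actE g⁻¹) f, eshift_flow_mem X actV actE hsrc htgt g⁻¹ f.2⟩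
      left_inv := by
        intro f; ext e
        simp [eshift]
      right_inv := by
        intro f; ext e
        simp [eshift]
      map_add' := by
        intro a b; ext e
        simp [eshift] }
  map_one' := by
    ext f e
    simp [eshift]
  map_mul' := by
    intro g h
    ext f e
    simp [eshift, mul_inv_rev]


/-- The directed Cayley graph of `G` with respect to `S`: an edge `g → g·s`
for every `g ∈ G`, `s ∈ S`. -/
def cayley (G : Type*) [Group G] (S : Finset G) : DiGraph G (G × ↥S) where
  src p := p.1
  tgt p := p.1 * ↑p.2

/-- Left multiplication action of `G` on the edges `G × T` of a Cayley-type graph. -/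
def cayAct (G : Type*) [Group G] (T : Type*) : G →* Equiv.Perm (G × T) where
  toFun g := Equiv.prodCongr (Equiv.mulLeft g) (Equiv.refl T)
  map_one' := by ext p <;> simp
  map_mul' := by intro g h; ext p <;> simp [mul_assoc]

theorem cayley_src_equivariant (G : Type*) [Group G] (S : Finset G) (g : G) (e : G × ↥S) :
    (cayley G S).src (cayAct G ↥S g e) = MulAction.toPermHom G G g ((cayley G S).src e) := rfl

theorem cayley_tgt_equivariant (G : Type*) [Group G] (S : Finset G) (g : G) (e : G × ↥S) :
    (cayley G S).tgt (cayAct G ↥S g e) = MulAction.toPermHom G G g ((cayley G S).tgt e) := by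
  show (g * e.1) * ↑e.2 = g * (e.1 * ↑e.2)
  rw [mul_assoc]
/-- The Cayley graph of a subgroup `H` with respect to a generating set `S₀ ⊆ H`. -/
def cayleyIn {G : Type*} [Group G] (H : Subgroup G) (S₀ : Finset G)
    (hS₀ : ∀ s ∈ S₀, s ∈ H) : DiGraph ↥H (↥H × ↥S₀) where
  src p := p.1
  tgt p := p.1 * ⟨↑p.2, hS₀ _ p.2.2⟩

theorem Function.Injective.extend_comp_eq_self {α β γ : Type*} [Zero γ] {i : α → β}
    (hi : Function.Injective i) {f : β → γ} (hf : ∀ b ∉ Set.range i, f b = 0) :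
    Function.extend i (f ∘ i) 0 = f := by
  funext b
  by_cases hb : b ∈ Set.range i
  · obtain ⟨a, rfl⟩ := hb
    exact hi.extend_apply _ _ a
  · rw [Function.extend_apply' _ _ _ hb, hf b hb, Pi.zero_apply]

namespace DiGraph

variable {V E : Type*} (X : DiGraph V E)

def AdjIn (P : Set E) (v w : V) : Prop := ∃ e ∈ P, X.src e = v ∧ X.tgt e = w

variable [Fintype E] [DecidableEq V]

theorem boundary_apply (f : E → ℤ) (v : V) :
    X.boundary f v =
      ∑ e, f e * ((if X.tgt e = v then 1 else 0) - (if X.src e = v then 1 else 0)) :=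
  rfl

theorem boundary_single [DecidableEq E] (e : E) :
    X.boundary (Pi.single e 1) = Pi.single (X.tgt e) 1 - Pi.single (X.src e) 1 := by
  funext v
  rw [boundary_apply, Fintype.sum_eq_single e fun e' he' => by simp [he']]
  simp [Pi.single_apply, eq_comm]

theorem eq_zero_of_forall_incident_eq_zero {f : E → ℤ} {v : V} (hf : X.boundary f v = 0)
    {e : E} (hloop : X.src e ≠ X.tgt e) (hv : X.src e = v ∨ X.tgt e = v)
    (hother : ∀ e' ≠ e, X.src e' = v ∨ X.tgt e' = v → f e' = 0) : f e = 0 := by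
  rw [boundary_apply, Fintype.sum_eq_single e fun e' he' => ?_] at hf
  · rcases hv with rfl | rfl <;> simp_all [Ne.symm hloop]
  · by_cases hinc : X.src e' = v ∨ X.tgt e' = v
    · rw [hother e' he' hinc, zero_mul]
    · simp_all

theorem exists_chain_of_eqvGen [DecidableEq E] {P : Set E} {v w : V}
    (h : Relation.EqvGen (X.AdjIn P) v w) :
    ∃ d : E → ℤ, (∀ e ∉ P, d e = 0) ∧ X.boundary d = Pi.single w 1 - Pi.single v 1 := by
  induction h with
  | rel v w hvw =>
    obtain ⟨e, he, rfl, rfl⟩ := hvw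
    exact ⟨Pi.single e 1, fun e' he' => Pi.single_eq_of_ne (ne_of_mem_of_not_mem he he').symm _,
      X.boundary_single e⟩
  | refl v => exact ⟨0, fun _ _ => rfl, by simp⟩
  | symm v w _ ih =>
    obtain ⟨d, hd, hb⟩ := ih
    exact ⟨-d, fun e he => by simp [hd e he], by rw [map_neg, hb, neg_sub]⟩
  | trans u v w _ _ ih₁ ih₂ =>
    obtain ⟨d₁, hd₁, hb₁⟩ := ih₁
    obtain ⟨d₂, hd₂, hb₂⟩ := ih₂
    exact ⟨d₁ + d₂, fun e he => by simp [hd₁ e he, hd₂ e he], by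
      rw [map_add, hb₁, hb₂]; abel⟩

theorem exists_flow_eq_single_of_eqvGen [DecidableEq E] {P : Set E}
    (hP : ∀ v w, Relation.EqvGen (X.AdjIn P) v w) (e : E) :
    ∃ c : LinearMap.ker X.boundary, ∀ e' ∉ P, (c : E → ℤ) e' = (Pi.single e 1 : E → ℤ) e' := by
  obtain ⟨d, hd, hb⟩ := X.exists_chain_of_eqvGen (hP (X.src e) (X.tgt e))
  refine ⟨⟨Pi.single e 1 - d, ?_⟩, fun e' he' => by simp [hd e' he']⟩
  rw [LinearMap.mem_ker, map_sub, hb, boundary_single, sub_self]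

section Embedding

variable {W F : Type*} [Fintype F] [DecidableEq W] {Y : DiGraph W F}

structure Embedding (Y : DiGraph W F) (X : DiGraph V E) where
  vert : W → V
  edge : F → E
  vert_injective : Function.Injective vert
  edge_injective : Function.Injective edge
  src_edge : ∀ e, X.src (edge e) = vert (Y.src e)
  tgt_edge : ∀ e, X.tgt (edge e) = vert (Y.tgt e)

variable {X} (ι : Y.Embedding X)

theorem Embedding.boundary_extend (g : F → ℤ) :
    X.boundary (Function.extend ι.edge g 0) = Function.extend ι.vert (Y.boundary g) 0 := by
  funext v
  rw [boundary_apply, ← Fintype.sum_of_injective ι.edge ι.edge_injective _ _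
    (fun e he => by rw [Function.extend_apply' _ _ _ he, Pi.zero_apply, zero_mul])
    (fun e => rfl)]
  by_cases hv : ∃ w, ι.vert w = v
  · obtain ⟨w, rfl⟩ := hv
    simp only [ι.edge_injective.extend_apply, ι.vert_injective.extend_apply, ι.src_edge,
      ι.tgt_edge, ι.vert_injective.eq_iff, boundary_apply]
  · rw [Function.extend_apply' _ _ _ hv]
    refine Finset.sum_eq_zero fun e _ => ?_
    simp [ι.src_edge, ι.tgt_edge, not_exists.mp hv]

theorem Embedding.extend_mem_ker {g : F → ℤ} (hg : g ∈ LinearMap.ker Y.boundary) :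
    Function.extend ι.edge g 0 ∈ LinearMap.ker X.boundary := by
  rw [LinearMap.mem_ker, ι.boundary_extend, LinearMap.mem_ker.mp hg, Function.extend_zero]

theorem Embedding.comp_mem_ker {f : E → ℤ} (hf : f ∈ LinearMap.ker X.boundary)
    (hsupp : ∀ e ∉ Set.range ι.edge, f e = 0) : f ∘ ι.edge ∈ LinearMap.ker Y.boundary := by
  rw [LinearMap.mem_ker] at hf ⊢
  rw [← ι.edge_injective.extend_comp_eq_self hsupp, ι.boundary_extend] at hf
  exact Function.extend_injective ι.vert_injective (0 : V → ℤ)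
    (hf.trans (Function.extend_zero ι.vert).symm)

noncomputable def Embedding.flowsEquiv (K : AddSubgroup (LinearMap.ker X.boundary))
    (hK : ∀ f, f ∈ K ↔ ∀ e ∉ Set.range ι.edge, (f : E → ℤ) e = 0) :
    K ≃+ LinearMap.ker Y.boundary where
  toFun f := ⟨(f : E → ℤ) ∘ ι.edge, ι.comp_mem_ker f.1.2 ((hK f).mp f.2)⟩
  invFun g := ⟨⟨Function.extend ι.edge g 0, ι.extend_mem_ker g.2⟩,
    (hK _).mpr fun e he => by simp [Function.extend_apply' _ _ _ he]⟩
  left_inv f := Subtype.ext (Subtype.ext (ι.edge_injective.extend_comp_eq_self ((hK f).mp f.2)))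
  right_inv g := by
    ext a
    exact ι.edge_injective.extend_apply _ _ a
  map_add' _ _ := rfl

end Embedding

end DiGraph

section Schreier

variable {G : Type*} [Group G] (S : Finset G) (H : Subgroup G)

def letter : ↥S ⊕ ↥S → G := Sum.elim (↑) fun s => (↑s)⁻¹

def letterEdge (g : G) : ↥S ⊕ ↥S → G × ↥S :=
  Sum.elim (fun s => (g, s)) fun s => (g * (↑s)⁻¹, s)

theorem letterEdge_ends (g : G) (a : ↥S ⊕ ↥S) :
    (cayley G S).src (letterEdge S g a) = g ∧
        (cayley G S).tgt (letterEdge S g a) = g * letter S a ∨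
      (cayley G S).src (letterEdge S g a) = g * letter S a ∧
        (cayley G S).tgt (letterEdge S g a) = g := by
  rcases a with s | s <;> simp [letterEdge, letter, cayley]

theorem letterEdge_mul_left (h g : G) (a : ↥S ⊕ ↥S) :
    letterEdge S (h * g) a = (h * (letterEdge S g a).1, (letterEdge S g a).2) := by
  rcases a with s | s <;> simp [letterEdge, mul_assoc]

def ReachesIn : ℕ → G → Prop
  | 0, g => g ∈ H
  | k + 1, g => ∃ a, ReachesIn k (g * letter S a)

theorem reachesIn_mul_left {h : G} (hh : h ∈ H) :
    ∀ {k : ℕ} {g : G}, ReachesIn S H k (h * g) ↔ ReachesIn S H k g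
  | 0, _ => H.mul_mem_cancel_left hh
  | _ + 1, _ => by simp only [ReachesIn, mul_assoc, reachesIn_mul_left hh]

theorem exists_reachesIn (hS : Subgroup.closure (S : Set G) = ⊤) (g : G) :
    ∃ k, ReachesIn S H k g := by
  have hg : g ∈ Subgroup.closure (S : Set G) := hS ▸ Subgroup.mem_top g
  induction hg using Subgroup.closure_induction_right with
  | one => exact ⟨0, H.one_mem⟩
  | mul_right x _ s hs ih =>
    obtain ⟨k, hk⟩ := ih
    exact ⟨k + 1, .inr ⟨s, hs⟩, by simpa [letter] using hk⟩
  | mul_inv_cancel x _ s hs ih =>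
    obtain ⟨k, hk⟩ := ih
    exact ⟨k + 1, .inl ⟨s, hs⟩, by simpa [letter] using hk⟩

/-- The distance from the coset `H g` to `H` in the Schreier coset graph (junk `0` when `H g` is
unreachable, which `S` generating `G` rules out). -/
noncomputable def depth (g : G) : ℕ := sInf {k | ReachesIn S H k g}

theorem depth_mul_left {h : G} (hh : h ∈ H) (g : G) : depth S H (h * g) = depth S H g := by
  simp only [depth, reachesIn_mul_left S H hh]

theorem depth_eq_zero_iff (hS : Subgroup.closure (S : Set G) = ⊤) {g : G} :
    depth S H g = 0 ↔ g ∈ H := by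
  rw [depth, Nat.sInf_eq_zero, Set.eq_empty_iff_forall_notMem]
  refine ⟨fun h => h.resolve_right fun hempty => ?_, Or.inl⟩
  obtain ⟨k, hk⟩ := exists_reachesIn S H hS g
  exact hempty k hk

theorem exists_depth_lt (hS : Subgroup.closure (S : Set G) = ⊤) {g : G} (hg : g ∉ H) :
    ∃ a, depth S H (g * letter S a) < depth S H g := by
  obtain ⟨k, hk⟩ := Nat.exists_eq_succ_of_ne_zero ((depth_eq_zero_iff S H hS).not.mpr hg)
  have hreach : ReachesIn S H (depth S H g) g := Nat.sInf_mem (exists_reachesIn S H hS g)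
  rw [hk] at hreach
  obtain ⟨a, ha⟩ := hreach
  exact ⟨a, hk ▸ Nat.lt_succ_of_le (Nat.sInf_le ha)⟩

/-- The chosen letter depends only on the coset `H g`, since the predicate it is chosen from does;
this makes the tree `H`-invariant. -/
def treeEdges : Set (G × ↥S) :=
  {e | ∃ g, ∃ hg : ∃ a, depth S H (g * letter S a) < depth S H g, letterEdge S g hg.choose = e}

theorem mul_left_mem_treeEdges {h : G} (hh : h ∈ H) {e : G × ↥S} (he : e ∈ treeEdges S H) :
    (h * e.1, e.2) ∈ treeEdges S H := by
  obtain ⟨g, hg, rfl⟩ := he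
  have hpred : (fun a => depth S H (h * g * letter S a) < depth S H (h * g)) =
      fun a => depth S H (g * letter S a) < depth S H g := by
    simp only [mul_assoc, depth_mul_left S H hh]
  refine ⟨h * g, hpred ▸ hg, ?_⟩
  rw [letterEdge_mul_left]
  congr 4
  simp [hpred]

theorem mul_left_mem_treeEdges_iff {h : G} (hh : h ∈ H) (e : G × ↥S) :
    (h * e.1, e.2) ∈ treeEdges S H ↔ e ∈ treeEdges S H := by
  refine ⟨fun he => ?_, mul_left_mem_treeEdges S H hh⟩
  simpa using mul_left_mem_treeEdges S H (H.inv_mem hh) he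

end Schreier

section Spanning

variable {G : Type*} [Group G] (S : Finset G) (H : Subgroup G)

def subEdges (S₀ : Finset G) : Set (G × ↥S) := {e | e.1 ∈ H ∧ (e.2 : G) ∈ S₀}

theorem eqvGen_of_letterEdge_mem {P : Set (G × ↥S)} {g : G} {a : ↥S ⊕ ↥S}
    (ha : letterEdge S g a ∈ P) :
    Relation.EqvGen ((cayley G S).AdjIn P) g (g * letter S a) := by
  rcases letterEdge_ends S g a with ⟨h₁, h₂⟩ | ⟨h₁, h₂⟩
  · exact .rel _ _ ⟨_, ha, h₁, h₂⟩
  · exact .symm _ _ (.rel _ _ ⟨_, ha, h₁, h₂⟩)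

theorem eqvGen_one_of_mem {S₀ : Finset G} (hsub : S₀ ⊆ S)
    (hS₀ : Subgroup.closure (S₀ : Set G) = H) {P : Set (G × ↥S)} (hP : subEdges S H S₀ ⊆ P)
    {v : G} (hv : v ∈ H) : Relation.EqvGen ((cayley G S).AdjIn P) v 1 := by
  rw [← hS₀] at hv
  induction hv using Subgroup.closure_induction_right with
  | one => exact .refl 1
  | mul_right x hx s hs ih =>
    have hedge : letterEdge S x (.inl ⟨s, hsub hs⟩) ∈ P := hP ⟨hS₀ ▸ hx, hs⟩
    exact .trans _ _ _ (.symm _ _ (eqvGen_of_letterEdge_mem S hedge)) ih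
  | mul_inv_cancel x hx s hs ih =>
    have hsH : s ∈ H := hS₀ ▸ Subgroup.subset_closure hs
    have hedge : letterEdge S x (.inr ⟨s, hsub hs⟩) ∈ P :=
      hP ⟨H.mul_mem (hS₀ ▸ hx) (H.inv_mem hsH), hs⟩
    exact .trans _ _ _ (.symm _ _ (eqvGen_of_letterEdge_mem S hedge)) ih

theorem eqvGen_adjIn_subEdges_union_treeEdges (hS : Subgroup.closure (S : Set G) = ⊤)
    {S₀ : Finset G} (hsub : S₀ ⊆ S) (hS₀ : Subgroup.closure (S₀ : Set G) = H) (v w : G) :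
    Relation.EqvGen ((cayley G S).AdjIn (subEdges S H S₀ ∪ treeEdges S H)) v w := by
  suffices h : ∀ v, Relation.EqvGen ((cayley G S).AdjIn (subEdges S H S₀ ∪ treeEdges S H)) v 1 from
    .trans _ _ _ (h v) (.symm _ _ (h w))
  intro v
  induction hk : depth S H v using Nat.strong_induction_on generalizing v with
  | _ k ih =>
    by_cases hv : v ∈ H
    · exact eqvGen_one_of_mem S H hsub hS₀ Set.subset_union_left hv
    · have hd := exists_depth_lt S H hS hv
      have htree : letterEdge S v hd.choose ∈ treeEdges S H := ⟨v, hd, rfl⟩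
      exact .trans _ _ _ (eqvGen_of_letterEdge_mem S (Or.inr htree))
        (ih _ (hk ▸ hd.choose_spec) _ rfl)

variable [Fintype G] [DecidableEq G]

/-- Tree edges are bridges: at the deeper end of a tree edge every other edge carrying flow is a
tree edge one level further down, so the claim follows by descending induction on the depth. -/
theorem apply_letterEdge_choose_eq_zero (hS : Subgroup.closure (S : Set G) = ⊤)
    {f : G × ↥S → ℤ} (hf : (cayley G S).boundary f = 0)
    (hsupp : ∀ e, f e ≠ 0 → e ∈ treeEdges S H ∨ e.1 ∈ H ∧ e.1 * ↑e.2 ∈ H)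
    (g : G) (hg : ∃ a, depth S H (g * letter S a) < depth S H g) :
    f (letterEdge S g hg.choose) = 0 := by
  set a := hg.choose
  have hlt : depth S H (g * letter S a) < depth S H g := hg.choose_spec
  have hgH : g ∉ H := fun h => by
    rw [(depth_eq_zero_iff S H hS).mpr h] at hlt; exact Nat.not_lt_zero _ hlt
  have hne : g * letter S a ≠ g := fun heq => lt_irrefl (depth S H g) (by rwa [heq] at hlt)
  have hends := letterEdge_ends S g a
  refine (cayley G S).eq_zero_of_forall_incident_eq_zero (congrFun hf g) ?_ (by tauto) ?_
  · rcases hends with ⟨h₁, h₂⟩ | ⟨h₁, h₂⟩ <;> rw [h₁, h₂]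
    exacts [hne.symm, hne]
  intro e hne hinc
  by_contra hfe
  rcases hsupp e hfe with ⟨w, hw, rfl⟩ | ⟨h₁, h₂⟩
  · obtain rfl | hwg := eq_or_ne w g
    · exact hne rfl
    have hgw : g = w * letter S hw.choose := by
      rcases letterEdge_ends S w hw.choose with ⟨h₁, h₂⟩ | ⟨h₁, h₂⟩ <;>
        rw [h₁, h₂] at hinc <;> tauto
    have hdeeper : depth S H g < depth S H w := hgw ▸ hw.choose_spec
    exact hfe (apply_letterEdge_choose_eq_zero hS hf hsupp w hw)
  · rcases hinc with rfl | rfl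
    exacts [hgH h₁, hgH h₂]
termination_by Finset.univ.sup (depth S H) - depth S H g
decreasing_by
  have := Finset.le_sup (f := depth S H) (Finset.mem_univ w)
  omega

end Spanning

def AddMonoidHom.kerProdEquivOfLeftInverse {A P : Type*} [AddCommGroup A] [AddCommGroup P]
    (ρ : A →+ P) (σ : P →+ A) (hσ : Function.LeftInverse ρ σ) : A ≃+ ρ.ker × P where
  toFun a := (⟨a - σ (ρ a), by simp [hσ (ρ a)]⟩, ρ a)
  invFun x := x.1 + σ x.2
  left_inv a := by simp
  right_inv x := by ext <;> simp [AddMonoidHom.mem_ker.mp x.1.2, hσ x.2]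
  map_add' a b := by ext <;> simp; abel

section Orbits

variable {G : Type*} [Group G] {S : Finset G} {H : Subgroup G}

variable (T : Set G) (P : Set (G × ↥S))

/-- Representatives `(t, s)`, `t ∈ T`, of the `H`-orbits of the edges outside `P`. -/
def ExtraRep : Type _ := {i : T × S // ((i.1 : G), i.2) ∉ P}

noncomputable instance [Finite G] : Fintype (ExtraRep T P) := by
  unfold ExtraRep; exact Fintype.ofFinite _

variable {T P}

def ExtraRep.edge (i : ExtraRep T P) : G × ↥S := (i.1.1, i.1.2)

variable (hT : Subgroup.IsComplement (H : Set G) T)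
  (hP : ∀ h ∈ H, ∀ e : G × ↥S, (h * e.1, e.2) ∈ P ↔ e ∈ P)
include hT

theorem ExtraRep.mul_edge_eq_iff {h h' : H} {i i' : ExtraRep T P} :
    ((h : G) * i.edge.1, i.edge.2) = ((h' : G) * i'.edge.1, i'.edge.2) ↔ h = h' ∧ i = i' := by
  refine ⟨fun heq => ?_, by rintro ⟨rfl, rfl⟩; rfl⟩
  obtain ⟨heq₁, heq₂⟩ := Prod.ext_iff.mp heq
  obtain ⟨h₁, h₂⟩ := Prod.ext_iff.mp
    (hT.1 (a₁ := (⟨h, h.2⟩, i.1.1)) (a₂ := (⟨h', h'.2⟩, i'.1.1)) heq₁)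
  exact ⟨Subtype.ext (congrArg Subtype.val h₁), Subtype.ext (α := T × S) (Prod.ext h₂ heq₂)⟩

include hP

theorem ExtraRep.exists_mul_edge_eq {e : G × ↥S} (he : e ∉ P) :
    ∃ (h : H) (i : ExtraRep T P), ((h : G) * i.edge.1, i.edge.2) = e := by
  obtain ⟨⟨h, t⟩, ht⟩ := hT.2 e.1
  refine ⟨⟨h, h.2⟩, ⟨(t, e.2), fun hmem => he ?_⟩, Prod.ext ht rfl⟩
  simpa [ht] using (hP h h.2 (t, e.2)).mpr hmem

end Orbits

section Splitting

variable {G : Type*} [Group G] [Fintype G] [DecidableEq G] {S : Finset G} {H : Subgroup G}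
  {T : Set G} {P : Set (G × ↥S)}

noncomputable abbrev cayleyFlowRep (S : Finset G) (H : Subgroup G) :
    H →* AddAut ↥(LinearMap.ker (cayley G S).boundary) :=
  flowRep (cayley G S) ((MulAction.toPermHom G G).comp H.subtype)
    ((cayAct G ↥S).comp H.subtype) (fun g e => cayley_src_equivariant G S ↑g e)
    (fun g e => cayley_tgt_equivariant G S ↑g e)

theorem cayleyFlowRep_apply (h : H) (f : LinearMap.ker (cayley G S).boundary) (e : G × ↥S) :
    (cayleyFlowRep S H h f : G × ↥S → ℤ) e = (f : G × ↥S → ℤ) ((h : G)⁻¹ * e.1, e.2) :=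
  rfl

variable (H T P) in
def extraCoeffs : LinearMap.ker (cayley G S).boundary →+ (ExtraRep T P → H → ℤ) where
  toFun f i h := (f : G × ↥S → ℤ) ((h : G) * i.edge.1, i.edge.2)
  map_zero' := rfl
  map_add' _ _ := rfl

theorem extraCoeffs_cayleyFlowRep (h : H) (f : LinearMap.ker (cayley G S).boundary) :
    extraCoeffs H T P (cayleyFlowRep S H h f) = fun i x => extraCoeffs H T P f i (h⁻¹ * x) := by
  funext i x
  simp [extraCoeffs, cayleyFlowRep_apply, mul_assoc]

variable (hT : Subgroup.IsComplement (H : Set G) T)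
  (hP : ∀ h ∈ H, ∀ e : G × ↥S, (h * e.1, e.2) ∈ P ↔ e ∈ P)

include hT hP in
theorem mem_ker_extraCoeffs_iff (f : LinearMap.ker (cayley G S).boundary) :
    f ∈ (extraCoeffs H T P).ker ↔ ∀ e ∉ P, (f : G × ↥S → ℤ) e = 0 := by
  refine ⟨fun hf e he => ?_, fun hf => ?_⟩
  · obtain ⟨h, i, rfl⟩ := ExtraRep.exists_mul_edge_eq hT hP he
    exact congrFun (congrFun (AddMonoidHom.mem_ker.mp hf) i) h
  · ext i h
    exact hf _ fun hmem => i.2 ((hP h h.2 i.edge).mp hmem)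

variable {c : ExtraRep T P → LinearMap.ker (cayley G S).boundary}
  (hc : ∀ i, ∀ e ∉ P, (c i : G × ↥S → ℤ) e = (Pi.single i.edge 1 : G × ↥S → ℤ) e)

include hT hP hc in
theorem cayleyFlowRep_apply_mul_edge [DecidableEq (ExtraRep T P)] (h h' : H)
    (i i' : ExtraRep T P) :
    (cayleyFlowRep S H h' (c i') : G × ↥S → ℤ) ((h : G) * i.edge.1, i.edge.2) =
      if h' = h ∧ i = i' then 1 else 0 := by
  have hmem : (((h'⁻¹ * h : H) : G) * i.edge.1, i.edge.2) ∉ P :=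
    fun hmem => i.2 ((hP _ (h'⁻¹ * h).2 i.edge).mp hmem)
  have hiff := ExtraRep.mul_edge_eq_iff hT (h := h'⁻¹ * h) (h' := 1) (i := i) (i' := i')
  simp only [OneMemClass.coe_one, one_mul, Prod.mk.eta, inv_mul_eq_one] at hiff
  rw [cayleyFlowRep_apply, ← mul_assoc]
  change (c i' : G × ↥S → ℤ) (((h'⁻¹ * h : H) : G) * i.edge.1, i.edge.2) = _
  rw [hc _ _ hmem, Pi.single_apply]
  exact if_congr hiff rfl rfl

variable [Fintype H]

variable (c) in
noncomputable def cycleSum :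
    (ExtraRep T P → H → ℤ) →+ LinearMap.ker (cayley G S).boundary where
  toFun x := ∑ i, ∑ h, x i h • cayleyFlowRep S H h (c i)
  map_zero' := by simp
  map_add' x y := by simp [add_smul, Finset.sum_add_distrib]

theorem cycleSum_shift (h : H) (y : ExtraRep T P → H → ℤ) :
    cycleSum c (fun i x => y i (h⁻¹ * x)) = cayleyFlowRep S H h (cycleSum c y) := by
  simp only [cycleSum, AddMonoidHom.coe_mk, ZeroHom.coe_mk, map_sum, map_zsmul]
  refine Finset.sum_congr rfl fun i _ => ?_
  refine Fintype.sum_equiv (Equiv.mulLeft h⁻¹) _ _ fun x => ?_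
  rw [Equiv.coe_mulLeft, ← addAutMulGroup_mul_apply, ← map_mul, mul_inv_cancel_left]

include hT hP hc in
theorem extraCoeffs_cycleSum : Function.LeftInverse (extraCoeffs H T P) (cycleSum c) := by
  classical
  intro x
  funext i h
  simp [extraCoeffs, cycleSum, cayleyFlowRep_apply_mul_edge hT hP hc, ite_and]

end Splitting

section CayleySubgraph

variable {G : Type*} [Group G] {S : Finset G} {H : Subgroup G} {S₀ : Finset G}

def subgraphEdge (hsub : S₀ ⊆ S) (p : H × S₀) : G × ↥S := (p.1, ⟨p.2, hsub p.2.2⟩)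

variable (H) in
def cayleyInEmbedding (hsub : S₀ ⊆ S) (hS₀H : ∀ s ∈ S₀, s ∈ H) :
    (cayleyIn H S₀ hS₀H).Embedding (cayley G S) where
  vert := Subtype.val
  edge := subgraphEdge hsub
  vert_injective := Subtype.val_injective
  edge_injective _ _ hpq := Prod.ext (Subtype.ext (congrArg Prod.fst hpq))
    (Subtype.ext (congrArg (fun e : G × ↥S => (e.2 : G)) hpq))
  src_edge _ := rfl
  tgt_edge _ := rfl

theorem range_subgraphEdge (hsub : S₀ ⊆ S) :
    Set.range (subgraphEdge (H := H) hsub) = subEdges S H S₀ := by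
  ext ⟨g, s⟩
  exact ⟨by rintro ⟨⟨⟨g, hg⟩, ⟨s, hs⟩⟩, hgs⟩; cases hgs; exact ⟨hg, hs⟩,
    fun ⟨hg, hs⟩ => ⟨(⟨g, hg⟩, ⟨s, hs⟩), rfl⟩⟩

theorem mul_left_mem_subEdges_union_treeEdges_iff {h : G} (hh : h ∈ H) (e : G × ↥S) :
    (h * e.1, e.2) ∈ subEdges S H S₀ ∪ treeEdges S H ↔ e ∈ subEdges S H S₀ ∪ treeEdges S H := by
  simp only [Set.mem_union, mul_left_mem_treeEdges_iff S H hh, subEdges, Set.mem_ofPred_eq,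
    H.mul_mem_cancel_left hh]

variable [Fintype G] [DecidableEq G] {T : Set G}

theorem mem_ker_extraCoeffs_subEdges_union_treeEdges_iff (hS : Subgroup.closure (S : Set G) = ⊤)
    (hsub : S₀ ⊆ S) (hS₀H : ∀ s ∈ S₀, s ∈ H) (hT : Subgroup.IsComplement (H : Set G) T)
    (f : LinearMap.ker (cayley G S).boundary) :
    f ∈ (extraCoeffs H T (subEdges S H S₀ ∪ treeEdges S H)).ker ↔
      ∀ e ∉ Set.range (subgraphEdge (H := H) hsub), (f : G × ↥S → ℤ) e = 0 := by
  rw [mem_ker_extraCoeffs_iff hT fun h hh => mul_left_mem_subEdges_union_treeEdges_iff hh,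
    range_subgraphEdge]
  refine ⟨fun hf e he => ?_, fun hf e he => hf e fun hmem => he (Or.inl hmem)⟩
  by_cases htree : e ∈ treeEdges S H
  · obtain ⟨g, hg, rfl⟩ := htree
    refine apply_letterEdge_choose_eq_zero S H hS (LinearMap.mem_ker.mp f.2)
      (fun e hfe => ?_) g hg
    by_contra hne
    refine hfe (hf e fun hmem => hne ?_)
    rcases hmem with ⟨he₁, he₂⟩ | htree
    exacts [Or.inr ⟨he₁, H.mul_mem he₁ (hS₀H _ he₂)⟩, Or.inl htree]
  · exact hf e fun hmem => hmem.elim he htree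

end CayleySubgraph

section CayleyFlowEquiv

variable {G : Type*} [Group G] [Fintype G] [DecidableEq G] {S : Finset G} {H : Subgroup G}
  [Fintype H] {S₀ : Finset G} {T : Set G}
  (hS : Subgroup.closure (S : Set G) = ⊤) (hsub : S₀ ⊆ S) (hS₀H : ∀ s ∈ S₀, s ∈ H)
  (hT : Subgroup.IsComplement (H : Set G) T)
  {c : ExtraRep T (subEdges S H S₀ ∪ treeEdges S H) → LinearMap.ker (cayley G S).boundary}
  (hc : ∀ i, ∀ e ∉ subEdges S H S₀ ∪ treeEdges S H,
    (c i : G × ↥S → ℤ) e = (Pi.single i.edge 1 : G × ↥S → ℤ) e)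

noncomputable def cayleyFlowEquiv :
    LinearMap.ker (cayley G S).boundary ≃+ LinearMap.ker (cayleyIn H S₀ hS₀H).boundary ×
      (ExtraRep T (subEdges S H S₀ ∪ treeEdges S H) → H → ℤ) :=
  (AddMonoidHom.kerProdEquivOfLeftInverse _ _ (extraCoeffs_cycleSum hT
    (fun _ hh => mul_left_mem_subEdges_union_treeEdges_iff hh) hc)).trans
  (AddEquiv.prodCongr ((cayleyInEmbedding H hsub hS₀H).flowsEquiv _
    (mem_ker_extraCoeffs_subEdges_union_treeEdges_iff hS hsub hS₀H hT)) (AddEquiv.refl _))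

theorem coe_cayleyFlowEquiv_fst (f : LinearMap.ker (cayley G S).boundary) :
    ((cayleyFlowEquiv hS hsub hS₀H hT hc f).1 : H × S₀ → ℤ) =
      (↑(f - cycleSum c (extraCoeffs H T _ f)) : G × ↥S → ℤ) ∘ subgraphEdge hsub :=
  rfl

theorem cayleyFlowEquiv_snd (f : LinearMap.ker (cayley G S).boundary) :
    (cayleyFlowEquiv hS hsub hS₀H hT hc f).2 = extraCoeffs H T _ f :=
  rfl

theorem coe_cayleyFlowEquiv_cayleyFlowRep_fst (h : H) (f : LinearMap.ker (cayley G S).boundary) :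
    ((cayleyFlowEquiv hS hsub hS₀H hT hc (cayleyFlowRep S H h f)).1 : H × S₀ → ℤ) =
      eshift (cayAct H S₀ h) (cayleyFlowEquiv hS hsub hS₀H hT hc f).1 := by
  rw [coe_cayleyFlowEquiv_fst, coe_cayleyFlowEquiv_fst, extraCoeffs_cayleyFlowRep,
    cycleSum_shift, ← map_sub]
  rfl

theorem cayleyFlowEquiv_cayleyFlowRep_snd (h : H) (f : LinearMap.ker (cayley G S).boundary) :
    (cayleyFlowEquiv hS hsub hS₀H hT hc (cayleyFlowRep S H h f)).2 =
      fun i x => (cayleyFlowEquiv hS hsub hS₀H hT hc f).2 i (h⁻¹ * x) :=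
  extraCoeffs_cayleyFlowRep h f

theorem cayleyFlowEquiv_of_forall_notMem_subEdges (f : LinearMap.ker (cayley G S).boundary)
    (hf : ∀ e ∉ subEdges S H S₀, (f : G × ↥S → ℤ) e = 0) :
    ((cayleyFlowEquiv hS hsub hS₀H hT hc f).1 : H × S₀ → ℤ) = (f : G × ↥S → ℤ) ∘ subgraphEdge hsub ∧
      (cayleyFlowEquiv hS hsub hS₀H hT hc f).2 = 0 := by
  have hzero : extraCoeffs H T (subEdges S H S₀ ∪ treeEdges S H) f = 0 :=
    AddMonoidHom.mem_ker.mp <| (mem_ker_extraCoeffs_iff hT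
      (fun _ hh => mul_left_mem_subEdges_union_treeEdges_iff hh) f).mpr
      fun e he => hf e fun hmem => he (Or.inl hmem)
  rw [coe_cayleyFlowEquiv_fst, cayleyFlowEquiv_snd, hzero, map_zero, sub_zero]
  exact ⟨rfl, rfl⟩

end CayleyFlowEquiv

/-- Let `S` generate `G`, let `H ≤ G` and let `S₀ ⊆ S` generate `H`.  Then, as
`H`-lattices, `Fl(Cay(G, S)) ≅ Fl(Cay(H, S₀)) ⊕ P` with `P` a free `ℤH`-module, the
isomorphism restricting to the natural (extension-by-zero) embedding of
`Fl(Cay(H, S₀))` induced by the inclusion of graphs `Cay(H, S₀) ⊆ Cay(G, S)`. -/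
theorem flow_lattice_restriction_to_subgroup {G : Type*} [Group G] [Fintype G]
    [DecidableEq G]
    (S : Finset G) (hSgen : Subgroup.closure (S : Set G) = ⊤)
    (H : Subgroup G) [Fintype ↥H]
    (S₀ : Finset G) (hsub : S₀ ⊆ S) (hS₀H : ∀ s ∈ S₀, s ∈ H)
    (hS₀gen : Subgroup.closure (S₀ : Set G) = H) :
    ∃ (ι : Type) (_ : Fintype ι)
      (φ : ↥(LinearMap.ker (cayley G S).boundary) ≃+
        ↥(LinearMap.ker (cayleyIn H S₀ hS₀H).boundary) × (ι → (↥H → ℤ))),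
      (∀ (h : ↥H) (f : ↥(LinearMap.ker (cayley G S).boundary)),
        (((φ (flowRep (cayley G S)
              ((MulAction.toPermHom G G).comp H.subtype)
              ((cayAct G ↥S).comp H.subtype)
              (fun g e => cayley_src_equivariant G S ↑g e)
              (fun g e => cayley_tgt_equivariant G S ↑g e) h f)).1 : ↥H × ↥S₀ → ℤ)
            = eshift (cayAct ↥H ↥S₀ h) ((φ f).1 : ↥H × ↥S₀ → ℤ)) ∧
        ((φ (flowRep (cayley G S)
              ((MulAction.toPermHom G G).comp H.subtype)
              ((cayAct G ↥S).comp H.subtype)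
              (fun g e => cayley_src_equivariant G S ↑g e)
              (fun g e => cayley_tgt_equivariant G S ↑g e) h f)).2
            = fun i x => (φ f).2 i (h⁻¹ * x))) ∧
      ∀ (f₀ : ↥H × ↥S₀ → ℤ) (hf₀ : f₀ ∈ LinearMap.ker (cayleyIn H S₀ hS₀H).boundary)
        (f : G × ↥S → ℤ) (hf : f ∈ LinearMap.ker (cayley G S).boundary),
          (∀ (x : ↥H) (s : ↥S₀), f (↑x, ⟨↑s, hsub s.2⟩) = f₀ (x, s)) →
          (∀ p : G × ↥S, (p.1 ∉ H ∨ (↑p.2 : G) ∉ S₀) → f p = 0) →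
          φ ⟨f, hf⟩ = (⟨f₀, hf₀⟩, 0) := by
  classical
  obtain ⟨T, hT, -⟩ := Subgroup.exists_isComplement_right H 1
  choose c hc using fun i : ExtraRep T (subEdges S H S₀ ∪ treeEdges S H) =>
    (cayley G S).exists_flow_eq_single_of_eqvGen
      (eqvGen_adjIn_subEdges_union_treeEdges S H hSgen hsub hS₀gen) i.edge
  let φ := cayleyFlowEquiv hSgen hsub hS₀H hT hc
  let reindex := (LinearEquiv.funCongrLeft ℤ (↥H → ℤ)
    (Fintype.equivFin (ExtraRep T (subEdges S H S₀ ∪ treeEdges S H))).symm).toAddEquiv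
  refine ⟨_, inferInstance, φ.trans (AddEquiv.prodCongr (AddEquiv.refl _) reindex),
    fun h f => ⟨?_, ?_⟩, fun f₀ hf₀ f hf hres hsupp => ?_⟩
  · exact coe_cayleyFlowEquiv_cayleyFlowRep_fst hSgen hsub hS₀H hT hc h f
  · funext b x
    exact congrFun (congrFun (cayleyFlowEquiv_cayleyFlowRep_snd hSgen hsub hS₀H hT hc h f) _) x
  · obtain ⟨h₁, h₂⟩ := cayleyFlowEquiv_of_forall_notMem_subEdges hSgen hsub hS₀H hT hc ⟨f, hf⟩
      fun e he => hsupp e (not_and_or.mp he)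
    refine Prod.ext (Subtype.ext ?_) ?_
    · exact h₁.trans (funext fun p => hres p.1 p.2)
    · exact (congrArg reindex h₂).trans (map_zero reindex)
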